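/- arXiv:1701.02687 — 2 statements merged into one kernel-verified Lean document; each statement's English description precedes it below -/
import Mathlib

section
/- For every natural number n ≥ 2, the Diophantine equation a_1^4 + a_2^4 + ... + a_n^4 = b_1^4 + b_2^4 + ... + b_n^4 has infinitely many nontrivial solutions in positive integers; that is, the set of pairs of n-tuples ((a_1,...,a_n), (b_1,...,b_n)) of positive integers with equal sums of fourth powers and with the multiset {a_1,...,a_n} different from the multiset {b_1,...,b_n} is infinite. -/
/-- For every natural number `n ≥ 2`, the equation `∑ a_i^4 = ∑ b_i^4` has infinitely
many nontrivial solutions in positive integers: the set of pairs of `n`-tuples of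
positive integers with equal sums of fourth powers and with different multisets of
entries is infinite. -/
theorem infinitely_many_nontrivial_sums_of_biquadrates (n : ℕ) (hn : 2 ≤ n) :
    {x : (Fin n → ℕ) × (Fin n → ℕ) |
      (∀ i, 0 < x.1 i) ∧ (∀ i, 0 < x.2 i) ∧
      (∑ i, (x.1 i) ^ 4) = (∑ i, (x.2 i) ^ 4) ∧
      (Multiset.ofList (List.ofFn x.1)) ≠ Multiset.ofList (List.ofFn x.2)}.Infinite := by
  obtain ⟨m, rfl⟩ := Nat.exists_eq_add_of_le' hn
  apply Set.infinite_of_injective_forall_mem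
    (f := fun k : ℕ =>
      ((Fin.cons (59 * (k + 1)) (Fin.cons (158 * (k + 1)) (fun _ => k + 1)),
        Fin.cons (133 * (k + 1)) (Fin.cons (134 * (k + 1)) (fun _ => k + 1))) :
      (Fin (m + 2) → ℕ) × (Fin (m + 2) → ℕ)))
  case hi =>
    intro k k' h
    have := congrArg (fun x => x.1 0) h
    simp at this
    omega
  case hf =>
    intro k
    refine ⟨?_, ?_, ?_, ?_⟩
    · intro i
      refine Fin.cases ?_ (fun j => Fin.cases ?_ (fun l => ?_) j) i <;> simp
    · intro i
      refine Fin.cases ?_ (fun j => Fin.cases ?_ (fun l => ?_) j) i <;> simp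
    · simp only [Fin.sum_univ_succ, Fin.cons_zero, Fin.cons_succ, Finset.sum_const,
        Finset.card_univ, Fintype.card_fin, smul_eq_mul]
      ring
    · intro h
      have h59 : (59 * (k + 1)) ∈ Multiset.ofList
          (List.ofFn (Fin.cons (59 * (k + 1)) (Fin.cons (158 * (k + 1)) (fun _ : Fin m => k + 1)) : Fin (m+2) → ℕ)) := by
        simp only [Multiset.mem_coe, List.mem_ofFn, Set.mem_range]
        exact ⟨0, by simp⟩
      rw [h] at h59
      simp only [Multiset.mem_coe, List.mem_ofFn, Set.mem_range] at h59
      obtain ⟨i, hi⟩ := h59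
      induction i using Fin.cases with
      | zero => simp at hi
      | succ j =>
        induction j using Fin.cases with
        | zero => simp at hi
        | succ l => simp at hi
end

section
/- Let h be a rational number with h^3 − h ≠ 0, and let (X, Y) be a rational point satisfying Y^2 = X^3 − 3·h^2·X^2 + 3·h·(h^3 − h)·X − (h^3 − h)^2. Define p = X/(h^3 − h), m = Y/(h^3 − h), q = h·p − 1, and set A = m − q, B = m + p, C = m + q, D = m − p. Then A^4 + h·B^4 = C^4 + h·D^4 and A + C = B + D. -/
/-!
Scaling by `d = h^3 - h` turns the cubic into its twist: `X = d p`, `Y = d m` lie on the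
cubic exactly when `m^2 = q^3 - h p^3` with `q = h p - 1`. On the twist,
`(m - q)^4 + h (m + p)^4 - (m + q)^4 - h (m - p)^4 = 8 m ((h p - q) m^2 + h p^3 - q^3)`
vanishes, because `h p - q = 1`.
-/

theorem cubic_eq_sq_mul_twist {R : Type*} [CommRing R] (h p : R) :
    (h ^ 3 - h) ^ 3 * p ^ 3 - 3 * h ^ 2 * ((h ^ 3 - h) * p) ^ 2
        + 3 * h * (h ^ 3 - h) * ((h ^ 3 - h) * p) - (h ^ 3 - h) ^ 2
      = (h ^ 3 - h) ^ 2 * ((h * p - 1) ^ 3 - h * p ^ 3) := by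
  ring

theorem twist_of_mem_cubic {K : Type*} [Field K] {h X Y : K} (hne : h ^ 3 - h ≠ 0)
    (hXY : Y ^ 2 = X ^ 3 - 3 * h ^ 2 * X ^ 2 + 3 * h * (h ^ 3 - h) * X - (h ^ 3 - h) ^ 2) :
    (Y / (h ^ 3 - h)) ^ 2 = (h * (X / (h ^ 3 - h)) - 1) ^ 3 - h * (X / (h ^ 3 - h)) ^ 3 := by
  set p := X / (h ^ 3 - h)
  have hX : X = (h ^ 3 - h) * p := (mul_div_cancel₀ X hne).symm
  have hd2 : (h ^ 3 - h) ^ 2 ≠ 0 := pow_ne_zero 2 hne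
  refine mul_left_cancel₀ hd2 ?_
  rw [← cubic_eq_sq_mul_twist, ← mul_pow, mul_div_cancel₀ Y hne, hXY, hX]
  ring

theorem quartic_eq_of_twist {R : Type*} [CommRing R] {h p q m : R}
    (hq : q = h * p - 1) (hm : m ^ 2 = q ^ 3 - h * p ^ 3) :
    (m - q) ^ 4 + h * (m + p) ^ 4 = (m + q) ^ 4 + h * (m - p) ^ 4 := by
  linear_combination 8 * m * hm - 8 * m ^ 3 * hq

/-- From a rational point `(X, Y)` on the cubic
`Y^2 = X^3 - 3*h^2*X^2 + 3*h*(h^3 - h)*X - (h^3 - h)^2` (with `h^3 - h ≠ 0`), setting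
`p = X/(h^3 - h)`, `m = Y/(h^3 - h)`, `q = h*p - 1` and `A = m - q`, `B = m + p`,
`C = m + q`, `D = m - p`, one gets `A^4 + h*B^4 = C^4 + h*D^4` and `A + C = B + D`. -/
theorem cubic_point_gives_quartic_solution (h X Y : ℚ) (hne : h ^ 3 - h ≠ 0)
    (hXY : Y ^ 2 = X ^ 3 - 3 * h ^ 2 * X ^ 2 + 3 * h * (h ^ 3 - h) * X - (h ^ 3 - h) ^ 2)
    (p m q A B C D : ℚ)
    (hp : p = X / (h ^ 3 - h)) (hm : m = Y / (h ^ 3 - h)) (hq : q = h * p - 1)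
    (hA : A = m - q) (hB : B = m + p) (hC : C = m + q) (hD : D = m - p) :
    A ^ 4 + h * B ^ 4 = C ^ 4 + h * D ^ 4 ∧ A + C = B + D := by
  subst hA hB hC hD
  refine ⟨quartic_eq_of_twist hq ?_, by ring⟩
  rw [hm, hq, hp]
  exact twist_of_mem_cubic hne hXY
end
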